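/- arXiv:2009.02137 — 3 statements merged into one kernel-verified Lean document; each statement's English description precedes it below -/
import Mathlib

section
/- For the BBG HIBE, a pair (sk1, sk2) ∈ G1 × G2 satisfies the deterministic verification equation e(h1^{H(id1)}⋯hℓ^{H(idℓ)}·g3, sk2) · e(g2, pk) = e(sk1, ĝ) if and only if sk1 = g2^α · (h1^{H(id1)}⋯hℓ^{H(idℓ)}·g3)^v and sk2 = ĝ^v for some v ∈ Z_p, where pk = ĝ^α. In particular, any honestly derived level-ℓ key satisfies the equation. -/
/-- BBG deterministic verification: a pair `(sk1, sk2)` satisfies the pairing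
equation `e(T, sk2) · e(g2, pk) = e(sk1, ĝ)` iff it is an honestly formed
level-ℓ key, i.e. `sk1 = g2^α · T^v`, `sk2 = ĝ^v` for some `v`.  Nondegeneracy
of `e(·, ĝ)` and cyclicity of `G2` are given as hypotheses. -/
theorem bbg_det_verification_iff
    {G1 G2 GT : Type} [CommGroup G1] [CommGroup G2] [CommGroup GT]
    (e : G1 → G2 → GT)
    (e_mul_left : ∀ x x' y, e (x * x') y = e x y * e x' y)
    (e_mul_right : ∀ x y y', e x (y * y') = e x y * e x y')
    (e_zpow_left : ∀ x y (n : ℤ), e (x ^ n) y = (e x y) ^ n)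
    (e_zpow_right : ∀ x y (n : ℤ), e x (y ^ n) = (e x y) ^ n)
    (g2 g3 : G1) (ghat : G2)
    (e_nondeg : ∀ x x' : G1, e x ghat = e x' ghat → x = x')
    (hcyc : ∀ y : G2, ∃ v : ℤ, y = ghat ^ v)
    (h : ℕ → G1) (HI : ℕ → ℤ) (ℓ : ℕ) (α : ℤ)
    (pk : G2) (hpk : pk = ghat ^ α)
    (T : G1) (hT : T = (∏ j ∈ Finset.range ℓ, (h (j + 1)) ^ (HI (j + 1))) * g3)
    (sk1 : G1) (sk2 : G2) :
    (e T sk2 * e g2 pk = e sk1 ghat) ↔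
      ∃ v : ℤ, sk1 = g2 ^ α * T ^ v ∧ sk2 = ghat ^ v := by
  constructor
  · intro hv
    obtain ⟨v, hv2⟩ := hcyc sk2
    refine ⟨v, ?_, hv2⟩
    apply e_nondeg
    simp only [← hv, hv2, hpk, e_mul_left, e_zpow_left, e_zpow_right]
    exact mul_comm _ _
  · rintro ⟨v, h1, h2⟩
    simp only [h1, h2, hpk, e_mul_left, e_zpow_left, e_zpow_right]
    exact mul_comm _ _
end

section
/- Conversely, the CHK tree key-management covers all future epochs: for any leaf i of a complete binary tree of depth d and any leaf j ≥ i, the set consisting of leaf i together with all existing right siblings of nodes on the path from leaf i to the root contains exactly one node whose encoding is a prefix of the d-bit encoding of j. -/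
/-- The `d`-bit binary encoding (most significant bit first) of the index of a
leaf of the complete binary tree of depth `d`; nodes of the tree are binary
strings (`List Bool`) of length ≤ `d`, the root being the empty string. -/
def leafEnc (d i : ℕ) : List Bool := (List.range d).map fun j => i.testBit (d - 1 - j)

/-- The set of nodes consisting of leaf `i` together with all existing right
siblings of nodes on the path from leaf `i` to the root: a node `w' ++ [false]`
on the path has right sibling `w' ++ [true]`. -/
def coverSet (d i : ℕ) : Set (List Bool) :=
  {leafEnc d i} ∪
    {w | ∃ w' : List Bool, (w' ++ [false]) <+: leafEnc d i ∧ w = w' ++ [true]}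

/-! Reading the `d`-bit encoding as a word, `i ≤ j` makes `leafEnc d i` lexicographically at most
`leafEnc d j`. If the two words agree, the leaf itself is the only cover node above `j`;
otherwise, at the first position where they differ `i` has bit `0` and `j` has bit `1`, and the
right sibling of the path node ending there is the only one. Both facts follow by induction on
the common prefix, since every cover node of `x :: a` other than `[true]` is `x` followed by a
cover node of `a`. -/

/-- `coverSet d i` is `siblingCover (leafEnc d i)`. -/
def siblingCover (a : List Bool) : Set (List Bool) :=
  {a} ∪ {w | ∃ w' : List Bool, (w' ++ [false]) <+: a ∧ w = w' ++ [true]}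

namespace siblingCover

theorem nil_eq : siblingCover [] = {[]} := by
  ext w
  simp [siblingCover]

theorem mem_cons_iff {x : Bool} {a w : List Bool} :
    w ∈ siblingCover (x :: a) ↔ (x = false ∧ w = [true]) ∨ ∃ v ∈ siblingCover a, w = x :: v := by
  simp only [siblingCover, Set.mem_union, Set.mem_singleton_iff, Set.mem_ofPred_eq]
  constructor
  · rintro (rfl | ⟨_ | ⟨c, w'⟩, hpre, rfl⟩)
    · exact Or.inr ⟨a, Or.inl rfl, rfl⟩
    · simp only [List.nil_append, List.cons_prefix_cons, List.nil_prefix, and_true] at hpre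
      exact Or.inl ⟨hpre.symm, rfl⟩
    · rw [List.cons_append, List.cons_prefix_cons] at hpre
      obtain ⟨rfl, hpre⟩ := hpre
      exact Or.inr ⟨w' ++ [true], Or.inr ⟨w', hpre, rfl⟩, rfl⟩
  · rintro (⟨rfl, rfl⟩ | ⟨v, rfl | ⟨w', hpre, rfl⟩, rfl⟩)
    · exact Or.inr ⟨[], by simp, rfl⟩
    · exact Or.inl rfl
    · exact Or.inr ⟨x :: w', List.cons_prefix_cons.2 ⟨rfl, hpre⟩, rfl⟩

theorem existsUnique_prefix_cons {x : Bool} {a b : List Bool}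
    (h : ∃! w, w ∈ siblingCover a ∧ w <+: b) :
    ∃! w, w ∈ siblingCover (x :: a) ∧ w <+: x :: b := by
  obtain ⟨v, ⟨hv, hvb⟩, huniq⟩ := h
  refine ⟨x :: v, ⟨mem_cons_iff.2 (Or.inr ⟨v, hv, rfl⟩), List.cons_prefix_cons.2 ⟨rfl, hvb⟩⟩, ?_⟩
  rintro w ⟨hw, hwb⟩
  rcases mem_cons_iff.1 hw with ⟨rfl, rfl⟩ | ⟨u, hu, rfl⟩
  · simp at hwb
  · rw [huniq u ⟨hu, (List.cons_prefix_cons.1 hwb).2⟩]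

theorem existsUnique_prefix_false_cons_true_cons (a b : List Bool) :
    ∃! w, w ∈ siblingCover (false :: a) ∧ w <+: true :: b := by
  refine ⟨[true], ⟨mem_cons_iff.2 (Or.inl ⟨rfl, rfl⟩), by simp⟩, ?_⟩
  rintro w ⟨hw, hwb⟩
  rcases mem_cons_iff.1 hw with ⟨-, rfl⟩ | ⟨u, -, rfl⟩
  · rfl
  · simp at hwb

theorem existsUnique_prefix_self (a : List Bool) : ∃! w, w ∈ siblingCover a ∧ w <+: a := by
  induction a with
  | nil => simp [nil_eq]
  | cons x a ih => exact existsUnique_prefix_cons ih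

theorem existsUnique_prefix_of_lt {a b : List Bool} (h : a < b) :
    ∃! w, w ∈ siblingCover a ∧ w <+: b := by
  induction (h : List.Lex (· < ·) a b) with
  | nil => exact ⟨[], by simp [nil_eq]⟩
  | rel hxy =>
    obtain ⟨rfl, rfl⟩ := Bool.lt_iff.1 hxy
    exact existsUnique_prefix_false_cons_true_cons _ _
  | cons _ ih => exact existsUnique_prefix_cons ih

theorem existsUnique_prefix_of_le {a b : List Bool} (h : a ≤ b) :
    ∃! w, w ∈ siblingCover a ∧ w <+: b := by
  rcases h.lt_or_eq with h | rfl
  · exact existsUnique_prefix_of_lt h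
  · exact existsUnique_prefix_self a

end siblingCover

theorem leafEnc_succ (d i : ℕ) : leafEnc (d + 1) i = i.testBit d :: leafEnc d i := by
  simp only [leafEnc, List.range_succ_eq_map, List.map_cons, List.map_map]
  congr 1
  refine List.map_congr_left fun k _ => ?_
  simp only [Function.comp_apply]
  congr 1
  omega

theorem leafEnc_succ_of_lt {d i : ℕ} (hi : i < 2 ^ d) : leafEnc (d + 1) i = false :: leafEnc d i := by
  rw [leafEnc_succ, Nat.testBit_lt_two_pow hi]

theorem leafEnc_two_pow_add (d i : ℕ) : leafEnc d (2 ^ d + i) = leafEnc d i := by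
  refine List.map_congr_left fun k hk => ?_
  rw [Nat.testBit_two_pow_add_gt (by simp at hk; omega)]

theorem leafEnc_succ_two_pow_add {d i : ℕ} (hi : i < 2 ^ d) :
    leafEnc (d + 1) (2 ^ d + i) = true :: leafEnc d i := by
  rw [leafEnc_succ, Nat.testBit_two_pow_add_eq, Nat.testBit_lt_two_pow hi, leafEnc_two_pow_add]
  rfl

theorem leafEnc_le_leafEnc {d i j : ℕ} (hij : i ≤ j) (hj : j < 2 ^ d) :
    leafEnc d i ≤ leafEnc d j := by
  induction d generalizing i j with
  | zero => simp [leafEnc]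
  | succ d ih =>
    rw [pow_succ] at hj
    rcases lt_or_ge j (2 ^ d) with hj' | hj'
    · rw [leafEnc_succ_of_lt (hij.trans_lt hj'), leafEnc_succ_of_lt hj']
      exact List.cons_le_cons _ (ih hij hj')
    obtain ⟨j, rfl⟩ := Nat.exists_eq_add_of_le hj'
    rw [leafEnc_succ_two_pow_add (by omega)]
    rcases lt_or_ge i (2 ^ d) with hi' | hi'
    · rw [leafEnc_succ_of_lt hi']
      exact le_of_lt (List.Lex.rel Bool.false_lt_true)
    obtain ⟨i, rfl⟩ := Nat.exists_eq_add_of_le hi'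
    rw [leafEnc_succ_two_pow_add (by omega)]
    exact List.cons_le_cons _ (ih (by omega) (by omega))

/-- The CHK tree key-management covers all future epochs: for any leaf `i` and
any leaf `j ≥ i` of the complete binary tree of depth `d`, the set consisting of
leaf `i` together with all existing right siblings of nodes on the path from
leaf `i` to the root contains exactly one node whose encoding is a prefix of the
`d`-bit encoding of `j`. -/
theorem chk_covers_future (d i j : ℕ) (hij : i ≤ j) (hj : j < 2 ^ d) :
    ∃! w : List Bool, w ∈ coverSet d i ∧ w <+: leafEnc d j :=
  siblingCover.existsUnique_prefix_of_le (leafEnc_le_leafEnc hij hj)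
end

section
/- In the forward-secure TBIDS reduction, the simulation condition is combinatorially sound: suppose the adversary's Update queries form a set Q^t ⊆ [n] and its forgery targets epoch i* with {1, …, i* − 1} ∩ Q^t = ∅ and (i* − 1, id*) not delegated. For each queried epoch i ∈ Q^t, the reduction queries the HIBS delegation oracle on binid(i) and on all right-sibling nodes along the path from leaf i to the root. Then none of these queried HIBS identities is a prefix of binid(i* − 1), hence the forgery remains valid for the HIBS. -/
/-!
Two leaves whose encodings extend `w' ++ [false]`, resp. `w' ++ [true]`, agree on all bits
above the branching position and differ there as `false < true`, so the first leaf is the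
smaller number. Hence a right sibling on the path of leaf `i` is a prefix only of leaves
`> i`, and leaf `i` only of itself; neither can prefix leaf `i* - 1 < i`.
-/

lemma leafEnc_length (d i : ℕ) : (leafEnc d i).length = d := by simp [leafEnc]

lemma getElem_of_isPrefix_leafEnc {d a : ℕ} {w : List Bool} (hw : w <+: leafEnc d a)
    {k : ℕ} (hk : k < w.length) : w[k] = a.testBit (d - 1 - k) := by
  simp [hw.getElem hk, leafEnc]

/-- Bit `p` of a leaf sits at position `d - 1 - p` of its encoding, so a common prefix of
length `m` fixes the bits `p ≥ d - m`; the bits `p ≥ d` vanish below `2 ^ d`. -/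
lemma testBit_eq_of_isPrefix_leafEnc {d a b : ℕ} (ha : a < 2 ^ d) (hb : b < 2 ^ d)
    {w : List Bool} (hwa : w <+: leafEnc d a) (hwb : w <+: leafEnc d b)
    {p : ℕ} (hp : d - w.length ≤ p) : a.testBit p = b.testBit p := by
  by_cases hpd : p < d
  · have hk : d - 1 - p < w.length := by omega
    have hdp : d - 1 - (d - 1 - p) = p := by omega
    rw [← hdp, ← getElem_of_isPrefix_leafEnc hwa hk, ← getElem_of_isPrefix_leafEnc hwb hk]
  · have hpow : 2 ^ d ≤ 2 ^ p := Nat.pow_le_pow_right two_pos (by omega)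
    rw [Nat.testBit_lt_two_pow (by omega), Nat.testBit_lt_two_pow (by omega)]

lemma leafEnc_injOn (d : ℕ) : Set.InjOn (leafEnc d) (Set.Iio (2 ^ d)) := by
  intro a ha b hb hab
  refine Nat.eq_of_testBit_eq fun p => testBit_eq_of_isPrefix_leafEnc ha hb
    (List.prefix_refl _) (hab ▸ List.prefix_refl _) ?_
  simp [leafEnc_length]

lemma lt_of_isPrefix_leafEnc_false_true {d a b : ℕ} (ha : a < 2 ^ d) (hb : b < 2 ^ d)
    {w : List Bool} (hwa : w ++ [false] <+: leafEnc d a) (hwb : w ++ [true] <+: leafEnc d b) :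
    a < b := by
  have hlen : w.length + 1 ≤ d := by simpa [leafEnc_length] using hwa.length_le
  have hbit (c : Bool) {n : ℕ} (h : w ++ [c] <+: leafEnc d n) :
      n.testBit (d - 1 - w.length) = c := by
    simpa using (getElem_of_isPrefix_leafEnc h (k := w.length) (by simp)).symm
  refine Nat.lt_of_testBit _ (hbit false hwa) (hbit true hwb) fun p hp => ?_
  exact testBit_eq_of_isPrefix_leafEnc ha hb ((List.prefix_append _ _).trans hwa)
    ((List.prefix_append _ _).trans hwb) (by omega)

theorem fs_tbids_reduction_sound_general (d : ℕ) (Qt : Set ℕ) (istar : ℕ)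
    (h1 : 1 ≤ istar)
    (hQ : ∀ i ∈ Qt, i < 2 ^ d)
    (hfresh : ∀ i ∈ Qt, istar ≤ i) :
    ∀ i ∈ Qt, ∀ w ∈ coverSet d i, ¬ w <+: leafEnc d (istar - 1) := by
  intro i hi w hw hprefix
  have hlt : istar - 1 < i := by have := hfresh i hi; omega
  have hi_lt : i < 2 ^ d := hQ i hi
  have hstar_lt : istar - 1 < 2 ^ d := hlt.trans hi_lt
  rcases hw with rfl | ⟨w', hbranch, rfl⟩
  · have heq : leafEnc d i = leafEnc d (istar - 1) :=
      hprefix.eq_of_length (by simp [leafEnc_length])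
    exact hlt.ne' (leafEnc_injOn d hi_lt hstar_lt heq)
  · exact hlt.not_gt (lt_of_isPrefix_leafEnc_false_true hi_lt hstar_lt hbranch hprefix)

/-- Combinatorial soundness of the forward-secure TBIDS reduction: if the
adversary's `Update` queries `Q^t` contain no epoch below the forgery target
`i*` (i.e. every queried epoch `i` satisfies `i* ≤ i`), then none of the HIBS
identities queried by the reduction — for each `i ∈ Q^t`, the leaf `binid(i)`
and all right siblings on the path from leaf `i` to the root — is a prefix of
`binid(i* − 1)`, so the forgery remains valid for the HIBS. -/
theorem fs_tbids_reduction_sound (d : ℕ) (Qt : Set ℕ) (istar : ℕ)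
    (h1 : 1 ≤ istar) (h2 : istar - 1 < 2 ^ d)
    (hQ : ∀ i ∈ Qt, i < 2 ^ d)
    (hfresh : ∀ i ∈ Qt, istar ≤ i) :
    ∀ i ∈ Qt, ∀ w ∈ coverSet d i, ¬ w <+: leafEnc d (istar - 1) :=
  fs_tbids_reduction_sound_general d Qt istar h1 hQ hfresh
end
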